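/- arXiv:1812.05419 — 3 statements merged into one kernel-verified Lean document; each statement's English description precedes it below -/
import Mathlib

section
/- Let G = (V, E) be a finite simple graph and let M1, M2 be matchings of G with |M1| = |M2|. If every connected component of the graph (V, M1 △ M2) that contains at least one edge is a path, then dist(M1, M2) = |M1 △ M2|/2. -/
open SimpleGraph

/-- A matching of `G`, given as a finite set of edges of `G`,
no two of which share an endpoint. -/
def IsMatchingSet {V : Type*} (G : SimpleGraph V) (M : Finset (Sym2 V)) : Prop :=
  (↑M ⊆ G.edgeSet) ∧ ∀ e ∈ M, ∀ f ∈ M, e ≠ f → ∀ v : V, v ∈ e → v ∉ f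

/-- A reconfiguration sequence of matchings from `M` to `N` of length `ℓ`. -/
def IsReconfSeq {V : Type*} [DecidableEq V] (G : SimpleGraph V) (M N : Finset (Sym2 V))
    (ℓ : ℕ) (seq : ℕ → Finset (Sym2 V)) : Prop :=
  seq 0 = M ∧ seq ℓ = N ∧ (∀ i ≤ ℓ, IsMatchingSet G (seq i)) ∧
    ∀ i < ℓ, (symmDiff (seq i) (seq (i + 1))).card = 2

/-- The distance between two matchings: the least length of a reconfiguration
sequence between them, `⊤` if none exists. -/
noncomputable def reconfDist {V : Type*} [DecidableEq V] (G : SimpleGraph V)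
    (M N : Finset (Sym2 V)) : ℕ∞ :=
  sInf {d : ℕ∞ | ∃ ℓ : ℕ, d = ℓ ∧ ∃ seq, IsReconfSeq G M N ℓ seq}

/-- The graph `(V, M △ N)` on the symmetric difference of two edge sets. -/
def sdGraph {V : Type*} [DecidableEq V] (M N : Finset (Sym2 V)) : SimpleGraph V :=
  SimpleGraph.fromEdgeSet ↑(symmDiff M N)

/-- The connected component `K` of `H` contains at least one edge. -/
def CompHasEdge {V : Type*} (H : SimpleGraph V) (K : H.ConnectedComponent) : Prop :=
  ∃ v w : V, H.Adj v w ∧ H.connectedComponentMk v = K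

/-- The connected component `K` of `H` is a path: some path of `H` visits exactly
the vertices of `K` and uses exactly the edges of `H` inside `K`. -/
def CompIsPath {V : Type*} (H : SimpleGraph V) (K : H.ConnectedComponent) : Prop :=
  ∃ (a b : V) (p : H.Walk a b), p.IsPath ∧
    (∀ v : V, H.connectedComponentMk v = K → v ∈ p.support) ∧
    (∀ e ∈ H.edgeSet, (∃ v, v ∈ e ∧ H.connectedComponentMk v = K) → e ∈ p.edges)

/-- The connected component `K` of `H` is a path with an odd number of edges. -/
def CompIsOddPath {V : Type*} (H : SimpleGraph V) (K : H.ConnectedComponent) : Prop :=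
  ∃ (a b : V) (p : H.Walk a b), p.IsPath ∧ Odd p.length ∧
    (∀ v : V, H.connectedComponentMk v = K → v ∈ p.support) ∧
    (∀ e ∈ H.edgeSet, (∃ v, v ∈ e ∧ H.connectedComponentMk v = K) → e ∈ p.edges)

/-- The connected component `K` of `H` is a cycle. -/
def CompIsCycle {V : Type*} (H : SimpleGraph V) (K : H.ConnectedComponent) : Prop :=
  ∃ (a : V) (p : H.Walk a a), p.IsCycle ∧
    (∀ v : V, H.connectedComponentMk v = K → v ∈ p.support) ∧
    (∀ e ∈ H.edgeSet, (∃ v, v ∈ e ∧ H.connectedComponentMk v = K) → e ∈ p.edges)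


open scoped symmDiff

/-!
Since every component of `M1 ∆ M2` is a path, `M1 ∆ M2` is a forest. A reconfiguration step
changes the symmetric difference with `M1` by at most two edges, which gives the lower bound.
For the upper bound it suffices to find `e ∈ M1 \ M2` and `f ∈ M2 \ M1` such that
`M1 - e + f` is a matching: its symmetric difference with `M2` is a forest with two fewer edges.
Such a swap exists as soon as some `f ∈ M2 \ M1` has an endpoint not covered by `M1`. Otherwise
`M1 \ M2` covers every vertex of `M2 \ M1`, and as both have the same size they cover the same
vertices; then every vertex of the forest `M1 ∆ M2` lies on two of its edges, whereas a finite
forest with an edge has a leaf.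
-/

namespace SimpleGraph

variable {V : Type*} {H : SimpleGraph V}

lemma Walk.IsCycle.not_edges_subset_edges_of_isPath {v a b : V} {c : H.Walk v v}
    (hc : c.IsCycle) (p : H.Walk a b) (hp : p.IsPath) : ¬ c.edges ⊆ p.edges := by
  induction p with
  | nil =>
    intro hsub
    exact hc.not_nil (Walk.edges_eq_nil.mp (List.subset_nil.mp hsub))
  | @cons a a' b h q ih =>
    intro hsub
    by_cases ha : a ∈ c.support
    · -- `a` has two neighbours on the cycle but only one on the path it starts
      have hnbr : c.toSubgraph.neighborSet a ⊆ {(Walk.cons h q).snd} := by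
        rw [← hp.neighborSet_toSubgraph_startpoint Walk.not_nil_cons]
        intro w hw
        rw [Subgraph.mem_neighborSet, Walk.adj_toSubgraph_iff_mem_edges] at hw ⊢
        exact hsub hw
      have := Set.ncard_le_ncard hnbr (Set.finite_singleton _)
      rw [hc.ncard_neighborSet_toSubgraph_eq_two ha, Set.ncard_singleton] at this
      omega
    · refine ih hp.of_cons fun e he => ?_
      have hne : e ≠ s(a, a') := by
        rintro rfl
        exact ha (c.fst_mem_support_of_mem_edges he)
      simpa [hne] using hsub he

lemma IsAcyclic.exists_vert_mem_unique_edge [Finite V] (hH : H.IsAcyclic) {e₀ : Sym2 V}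
    (he₀ : e₀ ∈ H.edgeSet) :
    ∃ u e, e ∈ H.edgeSet ∧ u ∈ e ∧ ∀ e' ∈ H.edgeSet, u ∈ e' → e' = e := by
  induction e₀ using Sym2.ind with | _ x y => ?_
  have hxy : H.Adj x y := he₀
  have : Nonempty V := ⟨x⟩
  obtain ⟨u, v, p, hp, hlongest⟩ := Walk.exists_isPath_forall_isPath_length_le_length H
  have hnil : ¬ p.Nil := by
    intro hnil
    have := hlongest x y (Walk.cons hxy .nil) (by simp [hxy.ne])
    simp [Walk.length_eq_zero_iff.mpr hnil] at this
  refine ⟨u, s(u, p.snd), p.adj_snd hnil, Sym2.mem_mk_left _ _, fun e' he' hue' => ?_⟩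
  obtain ⟨w, rfl⟩ := Sym2.mem_iff_exists.mp hue'
  have hadj : H.Adj u w := he'
  -- a neighbour off the path would extend the longest path
  have hw : w ∈ p.support := by
    by_contra hw
    have := hlongest w v (Walk.cons hadj.symm p) (hp.cons hw)
    simp at this
  rw [hH.eq_snd_of_adj_start hp hadj hw]

end SimpleGraph

lemma isAcyclic_of_forall_compIsPath {V : Type*} {H : SimpleGraph V}
    (hpaths : ∀ K : H.ConnectedComponent, CompHasEdge H K → CompIsPath H K) :
    H.IsAcyclic := by
  intro v c hc
  obtain ⟨a, b, p, hp, -, hedges⟩ :=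
    hpaths (H.connectedComponentMk v) ⟨v, c.snd, c.adj_snd hc.not_nil, rfl⟩
  refine hc.not_edges_subset_edges_of_isPath p hp fun e he =>
    hedges e (c.edges_subset_edgeSet he) ?_
  classical
  induction e using Sym2.ind with
  | _ x y =>
    have hx : x ∈ c.support := c.fst_mem_support_of_mem_edges he
    exact ⟨x, Sym2.mem_mk_left _ _, ConnectedComponent.sound ⟨c.dropUntil x hx⟩⟩

section Matching

variable {V : Type*} {G : SimpleGraph V} {M N : Finset (Sym2 V)}

namespace IsMatchingSet

lemma eq_of_mem (hM : IsMatchingSet G M) {e f : Sym2 V} (he : e ∈ M) (hf : f ∈ M) {v : V}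
    (hve : v ∈ e) (hvf : v ∈ f) : e = f := by
  by_contra hne
  exact hM.2 e he f hf hne v hve hvf

lemma subset (hM : IsMatchingSet G M) (hNM : N ⊆ M) : IsMatchingSet G N :=
  ⟨(Finset.coe_subset.mpr hNM).trans hM.1, fun e he f hf => hM.2 e (hNM he) f (hNM hf)⟩

end IsMatchingSet

variable [DecidableEq V]

def coveredVerts (M : Finset (Sym2 V)) : Finset V := M.biUnion Sym2.toFinset

@[simp] lemma mem_coveredVerts {v : V} : v ∈ coveredVerts M ↔ ∃ e ∈ M, v ∈ e := by
  simp [coveredVerts, Sym2.mem_toFinset]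

namespace IsMatchingSet

lemma insert (hM : IsMatchingSet G M) {f : Sym2 V} (hf : f ∈ G.edgeSet)
    (hfree : ∀ v ∈ f, v ∉ coveredVerts M) : IsMatchingSet G (insert f M) := by
  refine ⟨by simpa [Set.insert_subset_iff] using ⟨hf, hM.1⟩, ?_⟩
  simp only [Finset.mem_insert]
  rintro e (rfl | he) g (rfl | hg) hne v hve hvg
  · exact hne rfl
  · exact hfree v hve (mem_coveredVerts.mpr ⟨g, hg, hvg⟩)
  · exact hfree v hvg (mem_coveredVerts.mpr ⟨e, he, hve⟩)
  · exact hM.2 e he g hg hne v hve hvg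

lemma card_coveredVerts (hM : IsMatchingSet G M) : (coveredVerts M).card = 2 * M.card := by
  rw [coveredVerts, Finset.card_biUnion, Finset.sum_const_nat, mul_comm]
  · exact fun e he => Sym2.card_toFinset_of_not_isDiag e (G.not_isDiag_of_mem_edgeSet (hM.1 he))
  · intro e he f hf hne
    simp only [Function.onFun, Finset.disjoint_left, Sym2.mem_toFinset]
    exact fun v hve hvf => hM.2 e he f hf hne v hve hvf

lemma coveredVerts_eq_of_subset (hM : IsMatchingSet G M) (hN : IsMatchingSet G N)
    (hcard : M.card = N.card) (hsub : coveredVerts N ⊆ coveredVerts M) :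
    coveredVerts N = coveredVerts M :=
  Finset.eq_of_subset_of_card_le hsub (by rw [hM.card_coveredVerts, hN.card_coveredVerts, hcard])

end IsMatchingSet

end Matching

lemma Finset.sdiff_nonempty_of_card_eq_of_ne {α : Type*} [DecidableEq α] {s t : Finset α}
    (hcard : s.card = t.card) (hne : s ≠ t) : (s \ t).Nonempty :=
  Finset.sdiff_nonempty.mpr fun hst => hne (Finset.eq_of_subset_of_card_le hst hcard.ge)

lemma Finset.insert_erase_symmDiff {α : Type*} [DecidableEq α] {s t : Finset α} {e f : α}
    (he : e ∈ s \ t) (hf : f ∈ t \ s) :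
    insert f (s.erase e) ∆ t = ((s ∆ t).erase e).erase f := by
  ext g
  simp only [Finset.mem_sdiff] at he hf
  simp only [Finset.mem_symmDiff, Finset.mem_erase, Finset.mem_insert]
  grind

lemma Finset.symmDiff_insert_erase {α : Type*} [DecidableEq α] {s : Finset α} {e f : α}
    (he : e ∈ s) (hf : f ∉ s) : s ∆ insert f (s.erase e) = {e, f} := by
  ext g
  simp only [Finset.mem_symmDiff, Finset.mem_erase, Finset.mem_insert, Finset.mem_singleton]
  grind

section Swap

open Finset

variable {V : Type*} [DecidableEq V] {G : SimpleGraph V} {M1 M2 : Finset (Sym2 V)}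

lemma sdGraph_edgeSet (h1 : ↑M1 ⊆ G.edgeSet) (h2 : ↑M2 ⊆ G.edgeSet) :
    (sdGraph M1 M2).edgeSet = ↑(M1 ∆ M2) := by
  rw [sdGraph, SimpleGraph.edgeSet_fromEdgeSet, sdiff_eq_left, Set.disjoint_left]
  intro e he
  rcases Finset.mem_symmDiff.mp he with ⟨he, -⟩ | ⟨he, -⟩
  · exact G.not_isDiag_of_mem_edgeSet (h1 he)
  · exact G.not_isDiag_of_mem_edgeSet (h2 he)

lemma exists_uncovered_vert_of_isAcyclic [Finite V] (h1 : IsMatchingSet G M1)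
    (h2 : IsMatchingSet G M2) (hcard : M1.card = M2.card) (hac : (sdGraph M1 M2).IsAcyclic)
    (hne : M1 ≠ M2) : ∃ f ∈ M2 \ M1, ∃ y ∈ f, y ∉ coveredVerts M1 := by
  by_contra! hcov
  have hBA : coveredVerts (M2 \ M1) ⊆ coveredVerts (M1 \ M2) := by
    intro v hv
    obtain ⟨f, hf, hvf⟩ := mem_coveredVerts.mp hv
    obtain ⟨e, he, hve⟩ := mem_coveredVerts.mp (hcov f hf v hvf)
    rw [mem_sdiff] at hf
    have heM2 : e ∉ M2 := fun heM2 => hf.2 (h2.eq_of_mem heM2 hf.1 hve hvf ▸ he)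
    exact mem_coveredVerts.mpr ⟨e, mem_sdiff.mpr ⟨he, heM2⟩, hve⟩
  have hAB : coveredVerts (M2 \ M1) = coveredVerts (M1 \ M2) :=
    (h1.subset sdiff_subset).coveredVerts_eq_of_subset (h2.subset sdiff_subset)
      (card_sdiff_comm hcard) hBA
  have hedges := sdGraph_edgeSet h1.1 h2.1
  obtain ⟨f, hf⟩ := sdiff_nonempty_of_card_eq_of_ne hcard.symm hne.symm
  have hf' : f ∈ (sdGraph M1 M2).edgeSet := by
    rw [hedges, mem_coe, Finset.symmDiff_def]
    exact mem_union_right _ hf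
  -- a vertex on a unique edge of `M1 ∆ M2` cannot lie on edges of both `M1 \ M2` and `M2 \ M1`
  obtain ⟨u, e, he, hue, huniq⟩ := hac.exists_vert_mem_unique_edge hf'
  simp only [hedges, mem_coe, Finset.symmDiff_def, mem_union] at he huniq
  have hu : u ∈ coveredVerts (M1 \ M2) := by
    rcases he with he | he
    · exact mem_coveredVerts.mpr ⟨e, he, hue⟩
    · exact hBA (mem_coveredVerts.mpr ⟨e, he, hue⟩)
  obtain ⟨a, ha, hua⟩ := mem_coveredVerts.mp hu
  obtain ⟨b, hb, hub⟩ := mem_coveredVerts.mp (hAB ▸ hu)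
  have hab : a = b := (huniq a (Or.inl ha) hua).trans (huniq b (Or.inr hb) hub).symm
  exact (mem_sdiff.mp hb).2 (hab ▸ (mem_sdiff.mp ha).1)

lemma exists_swap_of_isAcyclic [Finite V] (h1 : IsMatchingSet G M1)
    (h2 : IsMatchingSet G M2) (hcard : M1.card = M2.card) (hac : (sdGraph M1 M2).IsAcyclic)
    (hne : M1 ≠ M2) :
    ∃ e ∈ M1 \ M2, ∃ f ∈ M2 \ M1, IsMatchingSet G (insert f (M1.erase e)) := by
  obtain ⟨f, hf, y, hyf, hy⟩ := exists_uncovered_vert_of_isAcyclic h1 h2 hcard hac hne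
  obtain ⟨x, rfl⟩ := Sym2.mem_iff_exists.mp hyf
  have hfM2 := (mem_sdiff.mp hf).1
  -- `e` is the edge of `M1` at the other endpoint `x`, if there is one, and arbitrary otherwise
  obtain ⟨e, he, hx⟩ : ∃ e ∈ M1 \ M2, ∀ g ∈ M1, x ∈ g → g = e := by
    by_cases hxcov : x ∈ coveredVerts M1
    · obtain ⟨e, he, hxe⟩ := mem_coveredVerts.mp hxcov
      refine ⟨e, mem_sdiff.mpr ⟨he, fun heM2 => ?_⟩,
        fun g hg hxg => h1.eq_of_mem hg he hxg hxe⟩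
      exact (mem_sdiff.mp hf).2 (h2.eq_of_mem heM2 hfM2 hxe (Sym2.mem_mk_right _ _) ▸ he)
    · obtain ⟨e, he⟩ := sdiff_nonempty_of_card_eq_of_ne hcard hne
      exact ⟨e, he, fun g hg hxg => absurd (mem_coveredVerts.mpr ⟨g, hg, hxg⟩) hxcov⟩
  refine ⟨e, he, s(y, x), hf, (h1.subset (erase_subset _ _)).insert (h2.1 hfM2) ?_⟩
  intro v hv hvcov
  obtain ⟨g, hg, hvg⟩ := mem_coveredVerts.mp hvcov
  rw [mem_erase] at hg
  rcases Sym2.mem_iff.mp hv with rfl | rfl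
  · exact hy (mem_coveredVerts.mpr ⟨g, hg.2, hvg⟩)
  · exact hg.1 (hx g hg.2 hvg)

end Swap

section Reconfiguration

open Finset

variable {V : Type*} [DecidableEq V] {G : SimpleGraph V} {M N : Finset (Sym2 V)}

namespace IsReconfSeq

lemma refl (hM : IsMatchingSet G M) : IsReconfSeq G M M 0 fun _ => M :=
  ⟨rfl, rfl, fun _ _ => hM, fun _ hi => absurd hi (Nat.not_lt_zero _)⟩

lemma cons {M' : Finset (Sym2 V)} {ℓ : ℕ} {seq : ℕ → Finset (Sym2 V)}
    (hM : IsMatchingSet G M) (hstep : (M ∆ M').card = 2) (h : IsReconfSeq G M' N ℓ seq) :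
    IsReconfSeq G M N (ℓ + 1) fun i => if i = 0 then M else seq (i - 1) := by
  obtain ⟨h0, hℓ, hmatch, hsteps⟩ := h
  refine ⟨if_pos rfl, hℓ, fun i hi => ?_, fun i hi => ?_⟩
  · rcases i with _ | i
    · exact hM
    · exact hmatch i (by omega)
  · rcases i with _ | i
    · simpa [h0] using hstep
    · simpa using hsteps i (by omega)

lemma card_symmDiff_le {ℓ : ℕ} {seq : ℕ → Finset (Sym2 V)} (h : IsReconfSeq G M N ℓ seq) :
    (M ∆ N).card ≤ 2 * ℓ := by
  obtain ⟨h0, hℓ, -, hsteps⟩ := h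
  suffices ∀ i ≤ ℓ, (M ∆ seq i).card ≤ 2 * i by simpa [hℓ] using this ℓ le_rfl
  intro i hi
  induction i with
  | zero => simp [h0]
  | succ i ih =>
    calc (M ∆ seq (i + 1)).card
        ≤ (M ∆ seq i ∪ seq i ∆ seq (i + 1)).card := card_le_card (symmDiff_triangle _ _ _)
      _ ≤ (M ∆ seq i).card + (seq i ∆ seq (i + 1)).card := card_union_le _ _
      _ ≤ 2 * (i + 1) := by have := hsteps i (by omega); have := ih (by omega); omega

end IsReconfSeq

lemma reconfDist_eq_of_isLeast {n : ℕ}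
    (h : IsLeast {ℓ | ∃ seq, IsReconfSeq G M N ℓ seq} n) : reconfDist G M N = n := by
  refine le_antisymm (sInf_le ⟨n, rfl, h.1⟩) (le_sInf ?_)
  rintro d ⟨ℓ, rfl, hℓ⟩
  exact_mod_cast h.2 hℓ

lemma exists_isReconfSeq_of_isAcyclic [Finite V] {M1 M2 : Finset (Sym2 V)} {n : ℕ}
    (h1 : IsMatchingSet G M1) (h2 : IsMatchingSet G M2) (hcard : M1.card = M2.card)
    (hac : (sdGraph M1 M2).IsAcyclic) (hn : (M1 ∆ M2).card = 2 * n) :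
    ∃ seq, IsReconfSeq G M1 M2 n seq := by
  induction n generalizing M1 with
  | zero =>
    rw [card_eq_zero, symmDiff_eq_empty] at hn
    subst hn
    exact ⟨_, IsReconfSeq.refl h1⟩
  | succ n ih =>
    have hne : M1 ≠ M2 := by
      rintro rfl
      simp at hn
    obtain ⟨e, he, f, hf, hswap⟩ := exists_swap_of_isAcyclic h1 h2 hcard hac hne
    have hef : e ≠ f := fun hef => (mem_sdiff.mp he).2 (hef ▸ (mem_sdiff.mp hf).1)
    have hsd := insert_erase_symmDiff he hf
    have hesd : e ∈ M1 ∆ M2 := mem_symmDiff.mpr (Or.inl (mem_sdiff.mp he))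
    have hfsd : f ∈ (M1 ∆ M2).erase e :=
      mem_erase.mpr ⟨hef.symm, mem_symmDiff.mpr (Or.inr (mem_sdiff.mp hf))⟩
    have hcard' : (insert f (M1.erase e)).card = M2.card := by
      rw [card_insert_of_notMem fun h => (mem_sdiff.mp hf).2 (mem_of_mem_erase h),
        card_erase_of_mem (mem_sdiff.mp he).1, ← hcard]
      exact Nat.sub_add_cancel (card_pos.mpr ⟨e, (mem_sdiff.mp he).1⟩)
    have hac' : (sdGraph (insert f (M1.erase e)) M2).IsAcyclic := by
      refine hac.anti (SimpleGraph.fromEdgeSet_mono ?_)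
      rw [hsd]
      exact coe_subset.mpr ((erase_subset _ _).trans (erase_subset _ _))
    have hn' : (insert f (M1.erase e) ∆ M2).card = 2 * n := by
      rw [hsd, card_erase_of_mem hfsd, card_erase_of_mem hesd]
      omega
    obtain ⟨seq, hseq⟩ := ih hswap hcard' hac' hn'
    refine ⟨_, hseq.cons h1 ?_⟩
    rw [symmDiff_insert_erase (mem_sdiff.mp he).1 fun h => (mem_sdiff.mp hf).2 h]
    exact card_pair hef

end Reconfiguration

/-- If every connected component of `(V, M1 △ M2)` containing at least one edge
is a path, then `dist(M1, M2) = |M1 △ M2| / 2`. -/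
theorem statement1 {V : Type*} [Fintype V] [DecidableEq V] (G : SimpleGraph V)
    (M1 M2 : Finset (Sym2 V)) (h1 : IsMatchingSet G M1) (h2 : IsMatchingSet G M2)
    (hcard : M1.card = M2.card)
    (hpaths : ∀ K : (sdGraph M1 M2).ConnectedComponent,
      CompHasEdge (sdGraph M1 M2) K → CompIsPath (sdGraph M1 M2) K) :
    reconfDist G M1 M2 = (((symmDiff M1 M2).card / 2 : ℕ) : ℕ∞) := by
  have hac := isAcyclic_of_forall_compIsPath hpaths
  have hn : (M1 ∆ M2).card = 2 * (M1 \ M2).card := by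
    rw [Finset.symmDiff_def, Finset.card_union_of_disjoint disjoint_sdiff_sdiff,
      Finset.card_sdiff_comm hcard]
    omega
  rw [hn, Nat.mul_div_cancel_left _ two_pos]
  refine reconfDist_eq_of_isLeast ⟨exists_isReconfSeq_of_isAcyclic h1 h2 hcard hac hn, ?_⟩
  rintro ℓ ⟨seq, hseq⟩
  have := hseq.card_symmDiff_le
  omega
end

section
/- Let G be a finite connected bipartite graph in which every edge is contained in some maximum matching, and suppose G has no perfect matching. Then there is a bipartition (U, W) of the vertex set of G such that for every maximum matching M of G, every M-exposed vertex belongs to U. -/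
open SimpleGraph

/-- `M` is a maximum matching of `G`. -/
def IsMaximumMatching {V : Type*} (G : SimpleGraph V) (M : Finset (Sym2 V)) : Prop :=
  IsMatchingSet G M ∧ ∀ N : Finset (Sym2 V), IsMatchingSet G N → N.card ≤ M.card

/-- A vertex is `M`-exposed if it is incident to no edge of `M`. -/
def MatchExposed {V : Type*} (M : Finset (Sym2 V)) (v : V) : Prop := ∀ e ∈ M, v ∉ e

section Aux

variable {V : Type*} [Fintype V] [DecidableEq V] {G : SimpleGraph V}

lemma matching_unique {M : Finset (Sym2 V)} (hM : IsMatchingSet G M) {e f : Sym2 V}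
    (he : e ∈ M) (hf : f ∈ M) {v : V} (hv : v ∈ e) (hv' : v ∈ f) : e = f := by
  by_contra h
  exact hM.2 e he f hf h v hv hv'

lemma not_exposed_iff {M : Finset (Sym2 V)} {v : V} :
    ¬ MatchExposed M v ↔ ∃ e ∈ M, v ∈ e := by
  unfold MatchExposed
  push_neg
  rfl

/-- Two adjacent vertices cannot both be exposed by a maximum matching. -/
lemma not_adj_both_exposed {M : Finset (Sym2 V)} (hM : IsMaximumMatching G M) {u v : V}
    (h : G.Adj u v) (hu : MatchExposed M u) (hv : MatchExposed M v) : False := by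
  have hnm : s(u, v) ∉ M := fun hm => hu _ hm (by simp)
  have hmatch : IsMatchingSet G (insert s(u, v) M) := by
    constructor
    · intro e he
      rcases Finset.mem_insert.mp (Finset.mem_coe.mp he) with he | he
      · exact he ▸ G.mem_edgeSet.mpr h
      · exact hM.1.1 he
    · intro e he f hf hef w hwe hwf
      rcases Finset.mem_insert.mp he with he' | he'
      · rcases Finset.mem_insert.mp hf with hf' | hf'
        · exact hef (he'.trans hf'.symm)
        · rcases Sym2.mem_iff.mp (he' ▸ hwe) with hw | hw
          · exact hu f hf' (hw ▸ hwf)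
          · exact hv f hf' (hw ▸ hwf)
      · rcases Finset.mem_insert.mp hf with hf' | hf'
        · rcases Sym2.mem_iff.mp (hf' ▸ hwf) with hw | hw
          · exact hu e he' (hw ▸ hwe)
          · exact hv e he' (hw ▸ hwe)
        · exact hM.1.2 e he' f hf' hef w hwe hwf
  have hcard := hM.2 _ hmatch
  rw [Finset.card_insert_of_notMem hnm] at hcard
  omega

/-- Swapping: if `u` is `M`-exposed, `v ∈ e₂ ∈ M`, and `u ~ v`, then replacing `e₂`
by `s(u,v)` gives another maximum matching. -/
lemma swap_isMaximum {M : Finset (Sym2 V)} (hM : IsMaximumMatching G M) {u v : V}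
    {e₂ : Sym2 V} (huv : G.Adj u v) (hu : MatchExposed M u) (he₂ : e₂ ∈ M) (hv : v ∈ e₂) :
    IsMaximumMatching G (insert s(u, v) (M.erase e₂)) := by
  have hnm : s(u, v) ∉ M := fun hm => hu _ hm (by simp)
  have hmatch : IsMatchingSet G (insert s(u, v) (M.erase e₂)) := by
    constructor
    · intro e he
      rcases Finset.mem_insert.mp (Finset.mem_coe.mp he) with he | he
      · exact he ▸ G.mem_edgeSet.mpr huv
      · exact hM.1.1 (Finset.mem_of_mem_erase he)
    · intro e he f hf hef w hwe hwf
      rcases Finset.mem_insert.mp he with he' | he'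
      · rcases Finset.mem_insert.mp hf with hf' | hf'
        · exact hef (he'.trans hf'.symm)
        · rcases Sym2.mem_iff.mp (he' ▸ hwe) with hw | hw
          · exact hu f (Finset.mem_of_mem_erase hf') (hw ▸ hwf)
          · exact Finset.ne_of_mem_erase hf'
              (matching_unique hM.1 (Finset.mem_of_mem_erase hf') he₂ (hw ▸ hwf) hv)
      · rcases Finset.mem_insert.mp hf with hf' | hf'
        · rcases Sym2.mem_iff.mp (hf' ▸ hwf) with hw | hw
          · exact hu e (Finset.mem_of_mem_erase he') (hw ▸ hwe)
          · exact Finset.ne_of_mem_erase he'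
              (matching_unique hM.1 (Finset.mem_of_mem_erase he') he₂ (hw ▸ hwe) hv)
        · exact hM.1.2 e (Finset.mem_of_mem_erase he') f (Finset.mem_of_mem_erase hf') hef
            w hwe hwf
  have hnotmem : s(u, v) ∉ M.erase e₂ := fun hm => hnm (Finset.mem_of_mem_erase hm)
  have hcard : (insert s(u, v) (M.erase e₂)).card = M.card := by
    rw [Finset.card_insert_of_notMem hnotmem, Finset.card_erase_of_mem he₂]
    have : 1 ≤ M.card := Finset.card_pos.mpr ⟨e₂, he₂⟩
    omega
  exact ⟨hmatch, fun N hN => hcard ▸ hM.2 N hN⟩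

lemma exposed_insert_erase {M : Finset (Sym2 V)} {e₁ e₂ : Sym2 V} {w : V}
    (hw : w ∉ e₁) (h : ∀ f ∈ M, w ∈ f → f = e₂) :
    MatchExposed (insert e₁ (M.erase e₂)) w := by
  intro e he hwe
  rcases Finset.mem_insert.mp he with rfl | he
  · exact hw hwe
  · exact Finset.ne_of_mem_erase he (h e (Finset.mem_of_mem_erase he) hwe)

variable (G) in
/-- Alternating-path lemma, version B: if `x` is exposed by the maximum matching `M`
and `b` (on the other side) is exposed by the maximum matching `M₁`, then some
maximum matching exposes both `x` and `b`. -/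
lemma brec (S : Set V) (hS : ∀ v w : V, G.Adj v w → (v ∈ S ↔ w ∉ S)) :
    ∀ (n : ℕ) (M M₁ : Finset (Sym2 V)) (x b : V),
      IsMaximumMatching G M → IsMaximumMatching G M₁ →
      MatchExposed M x → MatchExposed M₁ b → x ∈ S → b ∉ S →
      (M₁ \ M).card = n →
      ∃ M', IsMaximumMatching G M' ∧ MatchExposed M' x ∧ MatchExposed M' b ∧
        ∀ f ∈ M ∩ M₁, f ∈ M' := by
  intro n
  induction n using Nat.strong_induction_on with
  | _ n IH =>
    intro M M₁ x b hM hM₁ hx hb hxS hbS hcard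
    by_cases hx₁ : MatchExposed M₁ x
    · exact ⟨M₁, hM₁, hx₁, hb, fun f hf => (Finset.mem_inter.mp hf).2⟩
    · obtain ⟨e₁, he₁, hxe₁⟩ := not_exposed_iff.mp hx₁
      obtain ⟨x₁, rfl⟩ := Sym2.mem_iff_exists.mp hxe₁
      have hadj₁ : G.Adj x x₁ := G.mem_edgeSet.mp (hM₁.1.1 he₁)
      have hx₁S : x₁ ∉ S := (hS x x₁ hadj₁).mp hxS
      have hx₁b : x₁ ≠ b := fun h => hb _ he₁ (h ▸ Sym2.mem_mk_right x x₁)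
      have hx₁M : ¬ MatchExposed M x₁ := fun hexp => not_adj_both_exposed hM hadj₁ hx hexp
      obtain ⟨e₂, he₂, hx₁e₂⟩ := not_exposed_iff.mp hx₁M
      obtain ⟨y₂, rfl⟩ := Sym2.mem_iff_exists.mp hx₁e₂
      have hadj₂ : G.Adj x₁ y₂ := G.mem_edgeSet.mp (hM.1.1 he₂)
      have hy₂S : y₂ ∈ S := by
        have := hS x₁ y₂ hadj₂; tauto
      have hy₂x : y₂ ≠ x := by
        intro hcontr
        exact hx _ he₂ (hcontr ▸ Sym2.mem_mk_right x₁ y₂)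
      have hy₂b : y₂ ≠ b := fun h => hbS (h ▸ hy₂S)
      have he₁M : s(x, x₁) ∉ M := fun hm => hx _ hm (Sym2.mem_mk_left x x₁)
      have he₂M₁ : s(x₁, y₂) ∉ M₁ := by
        intro hm
        have := matching_unique hM₁.1 hm he₁ (Sym2.mem_mk_left x₁ y₂) (Sym2.mem_mk_right x x₁)
        exact he₁M (this ▸ he₂)
      -- the swapped matching M*
      have hMs : IsMaximumMatching G (insert s(x, x₁) (M.erase s(x₁, y₂))) :=
        swap_isMaximum hM hadj₁ hx he₂ (Sym2.mem_mk_left x₁ y₂)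
      have hy₂exp : MatchExposed (insert s(x, x₁) (M.erase s(x₁, y₂))) y₂ := by
        apply exposed_insert_erase
        · rw [Sym2.mem_iff]
          push_neg
          exact ⟨hy₂x, hadj₂.ne'⟩
        · intro f hf hy₂f
          exact matching_unique hM.1 hf he₂ hy₂f (Sym2.mem_mk_right x₁ y₂)
      -- measure decreases
      have hmeas : (M₁ \ (insert s(x, x₁) (M.erase s(x₁, y₂)))).card < n := by
        have hset : M₁ \ (insert s(x, x₁) (M.erase s(x₁, y₂))) = (M₁ \ M).erase s(x, x₁) := by
          ext f
          simp only [Finset.mem_sdiff, Finset.mem_insert, Finset.mem_erase, Finset.mem_sdiff]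
          constructor
          · rintro ⟨hfM₁, hf⟩
            push_neg at hf
            exact ⟨hf.1, hfM₁, hf.2 (fun hcontr => he₂M₁ (hcontr ▸ hfM₁))⟩
          · rintro ⟨hne, hfM₁, hfM⟩
            refine ⟨hfM₁, ?_⟩
            push_neg
            exact ⟨hne, fun _ => hfM⟩
        rw [hset]
        have hmem : s(x, x₁) ∈ M₁ \ M := Finset.mem_sdiff.mpr ⟨he₁, he₁M⟩
        have := Finset.card_erase_of_mem hmem
        have hpos : 1 ≤ (M₁ \ M).card := Finset.card_pos.mpr ⟨_, hmem⟩
        omega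
      obtain ⟨M'', hM'', hy₂'', hb'', hsub''⟩ :=
        IH _ hmeas _ M₁ y₂ b hMs hM₁ hy₂exp hb hy₂S hbS rfl
      have he₁M'' : s(x, x₁) ∈ M'' :=
        hsub'' _ (Finset.mem_inter.mpr ⟨Finset.mem_insert_self _ _, he₁⟩)
      -- pull back: M' = insert s(x₁,y₂) (M''.erase s(x,x₁))
      have hxx₁ : s(y₂, x₁) = s(x₁, y₂) := Sym2.eq_swap
      have hy₂M'' : MatchExposed M'' y₂ := hy₂''
      refine ⟨insert s(x₁, y₂) (M''.erase s(x, x₁)), ?_, ?_, ?_, ?_⟩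
      · have := swap_isMaximum hM'' hadj₂.symm hy₂M'' he₁M'' (Sym2.mem_mk_right x x₁)
        rwa [hxx₁] at this
      · apply exposed_insert_erase
        · rw [Sym2.mem_iff]
          push_neg
          exact ⟨hadj₁.ne, fun h => hy₂x h.symm⟩
        · intro f hf hxf
          exact matching_unique hM''.1 hf he₁M'' hxf (Sym2.mem_mk_left x x₁)
      · apply exposed_insert_erase
        · rw [Sym2.mem_iff]
          push_neg
          exact ⟨fun h => hx₁b h.symm, fun h => hy₂b h.symm⟩
        · intro f hf hbf
          exact absurd hbf (hb'' f hf)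
      · intro f hf
        obtain ⟨hfM, hfM₁⟩ := Finset.mem_inter.mp hf
        have hfne₂ : f ≠ s(x₁, y₂) := fun h => he₂M₁ (h ▸ hfM₁)
        have hfMs : f ∈ insert s(x, x₁) (M.erase s(x₁, y₂)) :=
          Finset.mem_insert_of_mem (Finset.mem_erase.mpr ⟨hfne₂, hfM⟩)
        have hfM'' : f ∈ M'' := hsub'' _ (Finset.mem_inter.mpr ⟨hfMs, hfM₁⟩)
        have hfne₁ : f ≠ s(x, x₁) := fun h => he₁M (h ▸ hfM)
        exact Finset.mem_insert_of_mem (Finset.mem_erase.mpr ⟨hfne₁, hfM''⟩)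

variable (G) in
/-- Alternating-path lemma, version A: if `x` is exposed by max matching `M` and
`s(y,z) ∈ M₁` (with `z` on `x`'s side, `z ≠ x`), then either some maximum matching
exposes `x` and contains `s(y,z)`, or some maximum matching exposes `z`. -/
lemma arec (S : Set V) (hS : ∀ v w : V, G.Adj v w → (v ∈ S ↔ w ∉ S)) :
    ∀ (n : ℕ) (M M₁ : Finset (Sym2 V)) (x y z : V),
      IsMaximumMatching G M → IsMaximumMatching G M₁ →
      MatchExposed M x → x ∈ S → y ∉ S → z ∈ S → z ≠ x → s(y, z) ∈ M₁ →
      (M₁ \ M).card = n →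
      (∃ M', IsMaximumMatching G M' ∧ MatchExposed M' x ∧ s(y, z) ∈ M' ∧
        ∀ f ∈ M ∩ M₁, f ∈ M') ∨
      (∃ M', IsMaximumMatching G M' ∧ MatchExposed M' z) := by
  intro n
  induction n using Nat.strong_induction_on with
  | _ n IH =>
    intro M M₁ x y z hM hM₁ hx hxS hyS hzS hzx he
    intro hcard
    have hxyz : x ∉ s(y, z) := by
      rw [Sym2.mem_iff]
      push_neg
      exact ⟨fun h => hyS (h ▸ hxS), fun h => hzx h.symm⟩
    by_cases hx₁ : MatchExposed M₁ x
    · exact Or.inl ⟨M₁, hM₁, hx₁, he, fun f hf => (Finset.mem_inter.mp hf).2⟩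
    · obtain ⟨e₁, he₁, hxe₁⟩ := not_exposed_iff.mp hx₁
      obtain ⟨x₁, rfl⟩ := Sym2.mem_iff_exists.mp hxe₁
      have hadj₁ : G.Adj x x₁ := G.mem_edgeSet.mp (hM₁.1.1 he₁)
      have hx₁S : x₁ ∉ S := (hS x x₁ hadj₁).mp hxS
      have hx₁M : ¬ MatchExposed M x₁ := fun hexp => not_adj_both_exposed hM hadj₁ hx hexp
      obtain ⟨e₂, he₂, hx₁e₂⟩ := not_exposed_iff.mp hx₁M
      obtain ⟨y₂, rfl⟩ := Sym2.mem_iff_exists.mp hx₁e₂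
      have hadj₂ : G.Adj x₁ y₂ := G.mem_edgeSet.mp (hM.1.1 he₂)
      have hy₂S : y₂ ∈ S := by
        have := hS x₁ y₂ hadj₂; tauto
      have hy₂x : y₂ ≠ x := by
        intro hcontr
        exact hx _ he₂ (hcontr ▸ Sym2.mem_mk_right x₁ y₂)
      have he₁M : s(x, x₁) ∉ M := fun hm => hx _ hm (Sym2.mem_mk_left x x₁)
      have he₂M₁ : s(x₁, y₂) ∉ M₁ := by
        intro hm
        have := matching_unique hM₁.1 hm he₁ (Sym2.mem_mk_left x₁ y₂) (Sym2.mem_mk_right x x₁)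
        exact he₁M (this ▸ he₂)
      have hMs : IsMaximumMatching G (insert s(x, x₁) (M.erase s(x₁, y₂))) :=
        swap_isMaximum hM hadj₁ hx he₂ (Sym2.mem_mk_left x₁ y₂)
      have hy₂exp : MatchExposed (insert s(x, x₁) (M.erase s(x₁, y₂))) y₂ := by
        apply exposed_insert_erase
        · rw [Sym2.mem_iff]
          push_neg
          exact ⟨hy₂x, hadj₂.ne'⟩
        · intro f hf hy₂f
          exact matching_unique hM.1 hf he₂ hy₂f (Sym2.mem_mk_right x₁ y₂)
      by_cases hy₂z : y₂ = z
      · -- we reached z: the swapped matching exposes z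
        exact Or.inr ⟨_, hMs, hy₂z ▸ hy₂exp⟩
      · -- recurse
        have hmeas : (M₁ \ (insert s(x, x₁) (M.erase s(x₁, y₂)))).card < n := by
          have hset : M₁ \ (insert s(x, x₁) (M.erase s(x₁, y₂))) = (M₁ \ M).erase s(x, x₁) := by
            ext f
            simp only [Finset.mem_sdiff, Finset.mem_insert, Finset.mem_erase]
            constructor
            · rintro ⟨hfM₁, hf⟩
              push_neg at hf
              exact ⟨hf.1, hfM₁, hf.2 (fun hcontr => he₂M₁ (hcontr ▸ hfM₁))⟩
            · rintro ⟨hne, hfM₁, hfM⟩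
              refine ⟨hfM₁, ?_⟩
              push_neg
              exact ⟨hne, fun _ => hfM⟩
          rw [hset]
          have hmem : s(x, x₁) ∈ M₁ \ M := Finset.mem_sdiff.mpr ⟨he₁, he₁M⟩
          have := Finset.card_erase_of_mem hmem
          have hpos : 1 ≤ (M₁ \ M).card := Finset.card_pos.mpr ⟨_, hmem⟩
          omega
        rcases IH _ hmeas _ M₁ y₂ y z hMs hM₁ hy₂exp hy₂S hyS hzS
            (fun h => hy₂z (h ▸ rfl)) he rfl with
          ⟨M'', hM'', hy₂'', heM'', hsub''⟩ | hright
        · -- pull back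
          have he₁M'' : s(x, x₁) ∈ M'' :=
            hsub'' _ (Finset.mem_inter.mpr ⟨Finset.mem_insert_self _ _, he₁⟩)
          have hxx₁ : s(y₂, x₁) = s(x₁, y₂) := Sym2.eq_swap
          refine Or.inl ⟨insert s(x₁, y₂) (M''.erase s(x, x₁)), ?_, ?_, ?_, ?_⟩
          · have := swap_isMaximum hM'' hadj₂.symm hy₂'' he₁M'' (Sym2.mem_mk_right x x₁)
            rwa [hxx₁] at this
          · apply exposed_insert_erase
            · rw [Sym2.mem_iff]
              push_neg
              exact ⟨hadj₁.ne, fun h => hy₂x h.symm⟩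
            · intro f hf hxf
              exact matching_unique hM''.1 hf he₁M'' hxf (Sym2.mem_mk_left x x₁)
          · -- s(y,z) ∈ M'
            have hne : s(y, z) ≠ s(x, x₁) := fun h => hxyz (h ▸ Sym2.mem_mk_left x x₁)
            exact Finset.mem_insert_of_mem (Finset.mem_erase.mpr ⟨hne, heM''⟩)
          · intro f hf
            obtain ⟨hfM, hfM₁⟩ := Finset.mem_inter.mp hf
            have hfne₂ : f ≠ s(x₁, y₂) := fun h => he₂M₁ (h ▸ hfM₁)
            have hfMs : f ∈ insert s(x, x₁) (M.erase s(x₁, y₂)) :=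
              Finset.mem_insert_of_mem (Finset.mem_erase.mpr ⟨hfne₂, hfM⟩)
            have hfM'' : f ∈ M'' := hsub'' _ (Finset.mem_inter.mpr ⟨hfMs, hfM₁⟩)
            have hfne₁ : f ≠ s(x, x₁) := fun h => he₁M (h ▸ hfM)
            exact Finset.mem_insert_of_mem (Finset.mem_erase.mpr ⟨hfne₁, hfM''⟩)
        · exact Or.inr hright

variable (G) in
/-- Exposable vertices on opposite sides cannot be adjacent. -/
lemma lemB (S : Set V) (hS : ∀ v w : V, G.Adj v w → (v ∈ S ↔ w ∉ S)) {x b : V}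
    (hxS : x ∈ S) (hbS : b ∉ S) (hadj : G.Adj x b)
    (hxexp : ∃ M, IsMaximumMatching G M ∧ MatchExposed M x)
    (hbexp : ∃ M, IsMaximumMatching G M ∧ MatchExposed M b) : False := by
  obtain ⟨M, hM, hx⟩ := hxexp
  obtain ⟨M₁, hM₁, hb⟩ := hbexp
  obtain ⟨M', hM', hx', hb', -⟩ :=
    brec G S hS (M₁ \ M).card M M₁ x b hM hM₁ hx hb hxS hbS rfl
  exact not_adj_both_exposed hM' hadj hx' hb'

variable (G) in
/-- Exposability propagates two steps along a path. -/
lemma lemA (S : Set V) (hS : ∀ v w : V, G.Adj v w → (v ∈ S ↔ w ∉ S))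
    (hedge : ∀ e ∈ G.edgeSet, ∃ M : Finset (Sym2 V), IsMaximumMatching G M ∧ e ∈ M)
    {x y z : V} (hxS : x ∈ S)
    (hxexp : ∃ M, IsMaximumMatching G M ∧ MatchExposed M x)
    (hxy : G.Adj x y) (hyz : G.Adj y z) (hzx : z ≠ x) :
    ∃ M, IsMaximumMatching G M ∧ MatchExposed M z := by
  have hyS : y ∉ S := (hS x y hxy).mp hxS
  have hzS : z ∈ S := by have := hS y z hyz; tauto
  obtain ⟨M, hM, hx⟩ := hxexp
  obtain ⟨M₁, hM₁, he⟩ := hedge s(y, z) (G.mem_edgeSet.mpr hyz)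
  rcases arec G S hS (M₁ \ M).card M M₁ x y z hM hM₁ hx hxS hyS hzS hzx he rfl with
    ⟨M', hM', hx', he', -⟩ | h
  · -- swap s(y,z) out for s(x,y); the result exposes z
    have hmax := swap_isMaximum hM' hxy hx' he' (Sym2.mem_mk_left y z)
    refine ⟨_, hmax, ?_⟩
    apply exposed_insert_erase
    · rw [Sym2.mem_iff]
      push_neg
      exact ⟨hzx, hyz.ne'⟩
    · intro f hf hzf
      exact matching_unique hM'.1 hf he' hzf (Sym2.mem_mk_right y z)
  · exact h

variable (G) in
/-- Walking from an exposable vertex in `S` to an exposable vertex out of `S`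
yields a contradiction. -/
lemma walk_chain (S : Set V) (hS : ∀ v w : V, G.Adj v w → (v ∈ S ↔ w ∉ S))
    (hedge : ∀ e ∈ G.edgeSet, ∃ M : Finset (Sym2 V), IsMaximumMatching G M ∧ e ∈ M)
    {b : V} (hbS : b ∉ S)
    (hbexp : ∃ M, IsMaximumMatching G M ∧ MatchExposed M b) :
    ∀ (n : ℕ) (c : V) (p : G.Walk c b), p.length = n → p.IsPath → c ∈ S →
      (∃ M, IsMaximumMatching G M ∧ MatchExposed M c) → False := by
  intro n
  induction n using Nat.strong_induction_on with
  | _ n IH =>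
    intro c p hlen hp hcS hcexp
    cases p with
    | nil => exact hbS hcS
    | @cons _ d _ h q =>
      cases q with
      | nil => exact lemB G S hS hcS hbS h hcexp hbexp
      | @cons _ f _ h₂ r =>
        have hrpath : r.IsPath := (hp.of_cons).of_cons
        have hcr : c ∉ (SimpleGraph.Walk.cons h₂ r).support :=
          (SimpleGraph.Walk.cons_isPath_iff _ _).mp hp |>.2
        have hfc : f ≠ c := by
          intro hfc
          apply hcr
          rw [SimpleGraph.Walk.support_cons]
          exact List.mem_cons_of_mem _ (hfc ▸ r.start_mem_support)
        have hfexp := lemA G S hS hedge hcS hcexp h h₂ hfc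
        have hfS : f ∈ S := by
          have h1 := hS c d h
          have h2 := hS d f h₂
          tauto
        have hlen' : r.length < n := by
          simp only [SimpleGraph.Walk.length_cons] at hlen
          omega
        exact IH r.length hlen' f r rfl hrpath hfS hfexp

end Aux

/-- If `G` is a finite connected bipartite graph in which every edge lies in some
maximum matching and which has no perfect matching, then there is a bipartition
`(U, Uᶜ)` of the vertex set such that for every maximum matching `M`, every
`M`-exposed vertex belongs to `U`. -/
theorem statement6 {V : Type*} [Fintype V] [DecidableEq V] (G : SimpleGraph V)
    (hconn : G.Connected)
    (hbip : ∃ U : Set V, ∀ v w : V, G.Adj v w → (v ∈ U ↔ w ∉ U))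
    (hedge : ∀ e ∈ G.edgeSet, ∃ M : Finset (Sym2 V), IsMaximumMatching G M ∧ e ∈ M)
    (hnoperfect : ¬ ∃ M : Finset (Sym2 V), IsMatchingSet G M ∧ ∀ v : V, ∃ e ∈ M, v ∈ e) :
    ∃ U : Set V, (∀ v w : V, G.Adj v w → (v ∈ U ↔ w ∉ U)) ∧
      ∀ M : Finset (Sym2 V), IsMaximumMatching G M →
        ∀ v : V, MatchExposed M v → v ∈ U := by
  obtain ⟨U₀, hU₀⟩ := hbip
  by_cases hcase : ∀ M : Finset (Sym2 V), IsMaximumMatching G M →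
      ∀ v : V, MatchExposed M v → v ∈ U₀
  · exact ⟨U₀, hU₀, hcase⟩
  · push_neg at hcase
    obtain ⟨Mb, hMb, b, hbexp, hbU⟩ := hcase
    refine ⟨U₀ᶜ, ?_, ?_⟩
    · intro v w hadj
      have := hU₀ v w hadj
      simp only [Set.mem_compl_iff]
      tauto
    · intro M hM v hv
      by_contra hvU
      simp only [Set.mem_compl_iff, not_not] at hvU
      obtain ⟨p⟩ := hconn.preconnected v b
      have hq := p.toPath
      exact walk_chain G U₀ hU₀ hedge hbU ⟨Mb, hMb, hbexp⟩ (hq : G.Path v b).1.length v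
        (hq : G.Path v b).1 rfl (hq : G.Path v b).2 hvU ⟨M, hM, hv⟩
end

section
/- In the directed Steiner tree instance (D, c, r, T) constructed from a bipartite graph G with maximum matchings M_s, M_t, assume a Steiner tree exists and let F be an optimal Steiner tree. Then for every path P ∈ 𝒫, the tree F contains the arc (r, v_P), where v_P is the unique M_s-exposed endpoint of P. -/
open SimpleGraph

/-- The edges of the walk `p` alternate between edges outside of `M`
and edges of `M`. -/
def MatchAlternating {V : Type*} {G : SimpleGraph V} (M : Finset (Sym2 V)) {x y : V}
    (p : G.Walk x y) : Prop :=
  List.Chain' (fun e f => (e ∈ M ↔ f ∉ M)) p.edges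

/-- There is an even-length `M`-alternating path in `G` from an `M`-exposed vertex
to `y`, starting with an edge not in `M` (a path of length zero is allowed). -/
def EvenAltReachable {V : Type*} (G : SimpleGraph V) (M : Finset (Sym2 V)) (y : V) : Prop :=
  ∃ (x : V) (p : G.Walk x y), MatchExposed M x ∧ p.IsPath ∧ MatchAlternating M p ∧
    (∀ e, p.edges.head? = some e → e ∉ M) ∧ Even p.length

/-- Membership in the non-root part of the vertex set `U'` of the auxiliary digraph
`D`: the vertices of `U` reachable from an `Ms`-exposed vertex by an even-length
`Ms`-alternating path. -/
def UprimeMem {V : Type*} (G : SimpleGraph V) (U : Set V) (Ms : Finset (Sym2 V))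
    (v : V) : Prop :=
  v ∈ U ∧ EvenAltReachable G Ms v

/-- The arc relation of the auxiliary digraph `D` on `Option V`, where `none` is the
root `r`: artificial arcs go from `r` to the `Ms`-exposed vertices, and there is an
arc `(u, w)` whenever some `v ∈ W = Uᶜ` satisfies `uv ∈ E \ Ms` and `vw ∈ Ms`. -/
def DArc {V : Type*} (G : SimpleGraph V) (U : Set V) (Ms : Finset (Sym2 V)) :
    Option V → Option V → Prop
  | none, some v => MatchExposed Ms v
  | some u, some w => UprimeMem G U Ms u ∧ UprimeMem G U Ms w ∧
      ∃ v : V, v ∈ Uᶜ ∧ s(u, v) ∈ G.edgeSet ∧ s(u, v) ∉ Ms ∧ s(v, w) ∈ Ms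
  | _, none => False

/-- The arc `(u, w)` is special: some `v` satisfies `uv ∈ Mt` and `vw ∈ Ms`. -/
def SpecialArc {V : Type*} (Ms Mt : Finset (Sym2 V)) (u w : V) : Prop :=
  ∃ v : V, s(u, v) ∈ Mt ∧ s(v, w) ∈ Ms

open Classical in
/-- The cost of an arc of `D`: artificial arcs cost `0`, special arcs cost `1`,
all other arcs cost `2`. -/
noncomputable def arcCost {V : Type*} (Ms Mt : Finset (Sym2 V)) :
    Option V → Option V → ℕ
  | none, _ => 0
  | some u, some w => if SpecialArc Ms Mt u w then 1 else 2
  | some _, none => 2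

/-- The cost of a set of arcs: the sum of the costs of its arcs. -/
noncomputable def treeCost {V : Type*} (Ms Mt : Finset (Sym2 V))
    (F : Finset (Option V × Option V)) : ℕ :=
  F.sum (fun a => arcCost Ms Mt a.1 a.2)

/-- The vertex `x` occurs in the arc set `F`. -/
def InTree {V : Type*} (F : Finset (Option V × Option V)) (x : Option V) : Prop :=
  ∃ a ∈ F, a.1 = x ∨ a.2 = x

/-- The terminal set `T ⊆ U'` of the Steiner tree instance: vertices of `U'` lying
on a connected component of `(V, Ms △ Mt)` containing at least one edge. -/
def SteinerTerminals {V : Type*} [DecidableEq V] (G : SimpleGraph V) (U : Set V)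
    (Ms Mt : Finset (Sym2 V)) : Set V :=
  {w | UprimeMem G U Ms w ∧
    CompHasEdge (sdGraph Ms Mt) ((sdGraph Ms Mt).connectedComponentMk w)}

/-- `F` is a Steiner tree for the instance `(D, c, r, T)`: a set of arcs of `D` such
that every vertex of `F` other than the root `none` has in-degree exactly one in `F`
and is reachable from the root by a directed path in `F`, and every terminal of `T`
is a vertex of `F`. -/
def IsSteinerTree {V : Type*} [DecidableEq V] (G : SimpleGraph V) (U : Set V)
    (Ms Mt : Finset (Sym2 V)) (T : Set V) (F : Finset (Option V × Option V)) : Prop :=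
  (∀ a ∈ F, DArc G U Ms a.1 a.2) ∧
  (∀ v : V, InTree F (some v) →
      (F.filter (fun a => a.2 = some v)).card = 1 ∧
      Relation.ReflTransGen (fun p q => (p, q) ∈ F) none (some v)) ∧
  (∀ t ∈ T, InTree F (some t))

section Statements

variable {V : Type*} [Fintype V] [DecidableEq V]

/-- In the Steiner tree instance constructed from a bipartite graph `G` with maximum
matchings `Ms`, `Mt`, every optimal Steiner tree `F` contains, for every path
component `P` of `(V, Ms △ Mt)`, the artificial arc from the root to the (unique)
`Ms`-exposed endpoint of `P`. -/
theorem statement11 (G : SimpleGraph V) (U : Set V) (Ms Mt : Finset (Sym2 V))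
    (hbip : ∀ v w : V, G.Adj v w → (v ∈ U ↔ w ∉ U))
    (hs : IsMaximumMatching G Ms) (ht : IsMaximumMatching G Mt)
    (hedge : ∀ e ∈ G.edgeSet, ∃ M : Finset (Sym2 V), IsMaximumMatching G M ∧ e ∈ M)
    (hexp : ∀ v : V, MatchExposed Ms v → v ∈ U)
    (F : Finset (Option V × Option V))
    (hF : IsSteinerTree G U Ms Mt (SteinerTerminals G U Ms Mt) F)
    (hopt : ∀ F' : Finset (Option V × Option V),
      IsSteinerTree G U Ms Mt (SteinerTerminals G U Ms Mt) F' →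
      treeCost Ms Mt F ≤ treeCost Ms Mt F') :
    ∀ K : (sdGraph Ms Mt).ConnectedComponent,
      CompHasEdge (sdGraph Ms Mt) K → CompIsPath (sdGraph Ms Mt) K →
      ∀ v : V, (sdGraph Ms Mt).connectedComponentMk v = K → MatchExposed Ms v →
        (none, some v) ∈ F := by
  intro K hKedge _hKpath v hvK hvexp
  have hterm : v ∈ SteinerTerminals G U Ms Mt := by
    refine ⟨⟨hexp v hvexp, v, .nil, hvexp, SimpleGraph.Walk.IsPath.nil, List.isChain_nil,
      ?_, ?_⟩, ?_⟩
    · intro e he; simp at he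
    · simp
    · rw [hvK]; exact hKedge
  obtain ⟨hdarc, hdeg, htermcov⟩ := hF
  have hin := htermcov v hterm
  have hcard := (hdeg v hin).1
  have hex : ∃ a ∈ F, a.2 = some v := by
    have hpos : 0 < (F.filter (fun a => a.2 = some v)).card := by rw [hcard]; norm_num
    obtain ⟨a, ha⟩ := Finset.card_pos.mp hpos
    rw [Finset.mem_filter] at ha
    exact ⟨a, ha.1, by simpa using ha.2⟩
  obtain ⟨a, haF, ha2⟩ := hex
  have hda := hdarc a haF
  rw [ha2] at hda
  cases h1 : a.1 with
  | none =>
    have : a = (none, some v) := Prod.ext h1 ha2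
    rwa [this] at haF
  | some u =>
    rw [h1] at hda
    obtain ⟨_, _, w, _, _, _, hwv⟩ := hda
    exact absurd (Sym2.mem_mk_right w v) (hvexp _ hwv)

end Statements
end
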